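/- arXiv:2510.02199 — 6 statements merged into one kernel-verified Lean document; each statement's English description precedes it below -/
import Mathlib

section
/- For any graph G = (V,E) and any linear ordering σ of V, the σ-subgraph G^σ is a co-interval subgraph of G. -/
def IsIntervalGraph {V : Type*} (G : SimpleGraph V) : Prop :=
  ∃ a b : V → ℝ, (∀ v, a v ≤ b v) ∧
    ∀ u v : V, u ≠ v →
      (G.Adj u v ↔ (Set.Icc (a u) (b u) ∩ Set.Icc (a v) (b v)).Nonempty)

def IsCoIntervalGraph {V : Type*} (G : SimpleGraph V) : Prop :=
  IsIntervalGraph Gᶜ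

/-- `VSig G σ i` is the set `V^σ_i`: the common neighbourhood of `σ 0, …, σ i`. -/
def VSig {V : Type*} (G : SimpleGraph V) {n : ℕ} (σ : Fin n ≃ V) (i : Fin n) : Set V :=
  ⋂ j ∈ Finset.Iic i, G.neighborSet (σ j)

/-- The σ-subgraph `G^σ`: its edges are those `σ i -- w` with `w ∈ V^σ_i`. -/
def sigmaSubgraph {V : Type*} (G : SimpleGraph V) {n : ℕ} (σ : Fin n ≃ V) :
    SimpleGraph V where
  Adj a b := (∃ i, a = σ i ∧ b ∈ VSig G σ i) ∨ (∃ i, b = σ i ∧ a ∈ VSig G σ i)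
  symm := by
    constructor
    intro a b h
    rcases h with h | h
    · exact Or.inr h
    · exact Or.inl h
  loopless := by
    constructor
    intro a h
    have key : ∀ i : Fin n, a = σ i → a ∈ VSig G σ i → False := by
      intro i ha hm
      have : a ∈ G.neighborSet (σ i) :=
        Set.mem_iInter₂.mp hm i (Finset.mem_Iic.mpr le_rfl)
      rw [← ha] at this
      exact G.irrefl this
    rcases h with ⟨i, ha, hm⟩ | ⟨i, ha, hm⟩ <;> exact key i ha hm

lemma VSig_antitone {V : Type*} (G : SimpleGraph V) {n : ℕ} (σ : Fin n ≃ V)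
    {i j : Fin n} (h : i ≤ j) : VSig G σ j ⊆ VSig G σ i := by
  intro v hv
  refine Set.mem_iInter₂.mpr fun k hk => Set.mem_iInter₂.mp hv k ?_
  exact Finset.mem_Iic.mpr (le_trans (Finset.mem_Iic.mp hk) h)

lemma not_mem_VSig_self {V : Type*} (G : SimpleGraph V) {n : ℕ} (σ : Fin n ≃ V)
    (i : Fin n) : σ i ∉ VSig G σ i := by
  intro h
  exact G.irrefl (Set.mem_iInter₂.mp h i (Finset.mem_Iic.mpr le_rfl))

open Classical in
/-- The least `k` such that `v ∉ V^σ_k` (or `n` if none). -/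
noncomputable def cfun {V : Type*} (G : SimpleGraph V) {n : ℕ} (σ : Fin n ≃ V) (v : V) : ℕ :=
  Nat.find (p := fun k => ∀ h : k < n, v ∉ VSig G σ ⟨k, h⟩)
    ⟨n, fun h => absurd h (lt_irrefl n)⟩

open Classical in
lemma mem_VSig_iff {V : Type*} (G : SimpleGraph V) {n : ℕ} (σ : Fin n ≃ V)
    (v : V) (i : Fin n) : v ∈ VSig G σ i ↔ (i : ℕ) < cfun G σ v := by
  constructor
  · intro hv
    by_contra hc
    push_neg at hc
    have hlt : cfun G σ v < n := lt_of_le_of_lt hc i.2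
    have hspec := Nat.find_spec (p := fun k => ∀ h : k < n, v ∉ VSig G σ ⟨k, h⟩)
      ⟨n, fun h => absurd h (lt_irrefl n)⟩
    exact hspec hlt (VSig_antitone G σ (by exact_mod_cast hc) hv)
  · intro hlt
    have := Nat.find_min (p := fun k => ∀ h : k < n, v ∉ VSig G σ ⟨k, h⟩)
      ⟨n, fun h => absurd h (lt_irrefl n)⟩ hlt
    simp only [not_forall, not_not] at this
    obtain ⟨h, hmem⟩ := this
    simpa using hmem

lemma cfun_le {V : Type*} (G : SimpleGraph V) {n : ℕ} (σ : Fin n ≃ V) (v : V) :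
    cfun G σ v ≤ (σ.symm v : ℕ) := by
  by_contra hc
  push_neg at hc
  have := (mem_VSig_iff G σ v (σ.symm v)).mpr hc
  exact not_mem_VSig_self G σ (σ.symm v) (by rw [σ.apply_symm_apply]; exact this)

lemma sigmaSubgraph_adj_iff {V : Type*} (G : SimpleGraph V) {n : ℕ} (σ : Fin n ≃ V)
    (u v : V) : (sigmaSubgraph G σ).Adj u v ↔
      ((σ.symm u : ℕ) < cfun G σ v ∨ (σ.symm v : ℕ) < cfun G σ u) := by
  constructor
  · rintro (⟨i, rfl, hm⟩ | ⟨i, rfl, hm⟩)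
    · left; rw [Equiv.symm_apply_apply]; exact (mem_VSig_iff G σ v i).mp hm
    · right; rw [Equiv.symm_apply_apply]; exact (mem_VSig_iff G σ u i).mp hm
  · rintro (h | h)
    · exact Or.inl ⟨σ.symm u, (σ.apply_symm_apply u).symm,
        (mem_VSig_iff G σ v (σ.symm u)).mpr h⟩
    · exact Or.inr ⟨σ.symm v, (σ.apply_symm_apply v).symm,
        (mem_VSig_iff G σ u (σ.symm v)).mpr h⟩

/-- For any graph `G` and any ordering `σ` of its vertices, the σ-subgraph `G^σ`
is a co-interval subgraph of `G`. -/
theorem sigmaSubgraph_is_coInterval_subgraph {V : Type*} [Fintype V]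
    (G : SimpleGraph V) (σ : Fin (Fintype.card V) ≃ V) :
    sigmaSubgraph G σ ≤ G ∧ IsCoIntervalGraph (sigmaSubgraph G σ) := by
  constructor
  · rintro a b (⟨i, rfl, hm⟩ | ⟨i, rfl, hm⟩)
    · exact Set.mem_iInter₂.mp hm i (Finset.mem_Iic.mpr le_rfl)
    · exact ((Set.mem_iInter₂.mp hm i (Finset.mem_Iic.mpr le_rfl)) : G.Adj _ _).symm
  · refine ⟨fun v => (cfun G σ v : ℝ), fun v => ((σ.symm v : ℕ) : ℝ), ?_, ?_⟩
    · intro v; dsimp only; exact_mod_cast cfun_le G σ v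
    · intro u v huv
      rw [Set.Icc_inter_Icc, Set.nonempty_Icc, le_min_iff, max_le_iff, max_le_iff]
      dsimp only
      have hu := cfun_le G σ u
      have hv := cfun_le G σ v
      constructor
      · intro h
        simp only [SimpleGraph.compl_adj] at h
        rw [sigmaSubgraph_adj_iff] at h
        push_neg at h
        obtain ⟨-, h1, h2⟩ := h
        refine ⟨⟨by exact_mod_cast hu, by exact_mod_cast h1⟩,
          ⟨by exact_mod_cast h2, by exact_mod_cast hv⟩⟩
      · rintro ⟨⟨-, h2⟩, ⟨h1, -⟩⟩
        refine ⟨huv, ?_⟩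
        rw [sigmaSubgraph_adj_iff]
        push_neg
        constructor
        · exact_mod_cast h2
        · exact_mod_cast h1
end

section
/- If a graph G is the disjoint union of graphs H₁, …, H_t, then the co-boxicity of G equals the sum of the co-boxicities of H₁, …, H_t. -/
/-- The co-boxicity of `G`: the minimum number of co-interval subgraphs of `G`
needed to cover all edges of `G` (0 for edgeless graphs). -/
noncomputable def coboxicity {V : Type*} (G : SimpleGraph V) : ℕ :=
  sInf {k : ℕ | ∃ f : Fin k → SimpleGraph V,
    (∀ i, f i ≤ G ∧ IsCoIntervalGraph (f i)) ∧
    ∀ u v : V, G.Adj u v → ∃ i, (f i).Adj u v}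

/-- The disjoint union of a family of graphs. -/
def sigmaGraph {ι : Type*} {V : ι → Type*} (H : ∀ i, SimpleGraph (V i)) :
    SimpleGraph (Σ i, V i) where
  Adj a b := ∃ (i : ι) (x y : V i), (H i).Adj x y ∧ a = ⟨i, x⟩ ∧ b = ⟨i, y⟩
  symm := by constructor; rintro a b ⟨i, x, y, h, rfl, rfl⟩; exact ⟨i, y, x, h.symm, rfl, rfl⟩
  loopless := by
    constructor
    rintro a ⟨i, x, y, h, rfl, h2⟩
    obtain ⟨-, hxy⟩ := Sigma.mk.inj_iff.mp h2
    exact h.ne (eq_of_heq hxy)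

/-! ### Auxiliary definitions -/


/-- `k` co-interval subgraphs of `G` suffice to cover the edges of `G`. -/
def Covers {V : Type*} (G : SimpleGraph V) (k : ℕ) : Prop :=
  ∃ f : Fin k → SimpleGraph V,
    (∀ i, f i ≤ G ∧ IsCoIntervalGraph (f i)) ∧
    ∀ u v : V, G.Adj u v → ∃ i, (f i).Adj u v

lemma coboxicity_eq_sInf {V : Type*} (G : SimpleGraph V) :
    coboxicity G = sInf {k | Covers G k} := rfl

lemma icc_inter_nonempty (a b c d : ℝ) :
    (Set.Icc a b ∩ Set.Icc c d).Nonempty ↔ max a c ≤ min b d := by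
  rw [Set.Icc_inter_Icc, Set.nonempty_Icc]

/-- Embed a graph on `V i` into the sigma type. -/
def embedG {ι : Type*} {V : ι → Type*} (i : ι) (F : SimpleGraph (V i)) :
    SimpleGraph (Σ j, V j) where
  Adj a b := ∃ x y : V i, F.Adj x y ∧ a = ⟨i, x⟩ ∧ b = ⟨i, y⟩
  symm := by constructor; rintro a b ⟨x, y, h, rfl, rfl⟩; exact ⟨y, x, h.symm, rfl, rfl⟩
  loopless := by
    constructor
    rintro a ⟨x, y, h, rfl, h2⟩
    obtain ⟨-, hxy⟩ := Sigma.mk.inj_iff.mp h2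
    exact h.ne (eq_of_heq hxy)

/-- Restrict a graph on the sigma type to component `i`. -/
def restrictG {ι : Type*} {V : ι → Type*} (i : ι) (F : SimpleGraph (Σ j, V j)) :
    SimpleGraph (V i) where
  Adj x y := F.Adj ⟨i, x⟩ ⟨i, y⟩
  symm := ⟨fun _ _ h => F.symm.symm _ _ h⟩
  loopless := ⟨fun _ h => F.loopless.irrefl _ h⟩

lemma sigma_mk_ne {ι : Type*} {V : ι → Type*} {i : ι} {x y : V i} (h : x ≠ y) :
    (⟨i, x⟩ : Σ j, V j) ≠ ⟨i, y⟩ := by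
  intro he
  exact h (eq_of_heq (Sigma.mk.inj_iff.mp he).2)

lemma sigma_mk_fst_ne {ι : Type*} {V : ι → Type*} {i j : ι} {x : V i} {y : V j} (h : i ≠ j) :
    (⟨i, x⟩ : Σ j, V j) ≠ ⟨j, y⟩ := by
  intro he
  exact h (Sigma.mk.inj_iff.mp he).1

/-! ### Basic co-interval graphs -/

lemma isCoInterval_bot {V : Type*} : IsCoIntervalGraph (⊥ : SimpleGraph V) := by
  refine ⟨fun _ => 0, fun _ => 0, fun _ => le_rfl, fun u v huv => ?_⟩
  simp [icc_inter_nonempty, huv]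

lemma isCoInterval_single {V : Type*} {x y : V} (hxy : x ≠ y) :
    IsCoIntervalGraph (SimpleGraph.fromEdgeSet {s(x, y)}) := by
  classical
  refine ⟨fun u => if u = y then 2 else 0, fun u => if u = x then 1 else 3,
    fun v => ?_, fun u v huv => ?_⟩
  · by_cases hvy : v = y <;> by_cases hvx : v = x <;>
      simp_all <;> norm_num
  · have hadj : (SimpleGraph.fromEdgeSet {s(x, y)})ᶜ.Adj u v ↔ ¬ s(u, v) = s(x, y) := by
      simp [SimpleGraph.compl_adj, huv]
    rw [hadj, icc_inter_nonempty, Sym2.eq_iff]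
    by_cases hux : u = x <;> by_cases huy : u = y <;>
      by_cases hvx : v = x <;> by_cases hvy : v = y <;>
      subst_vars <;> simp_all <;> norm_num

/-- Every graph on a finite vertex set has some cover. -/
lemma covers_nonempty {V : Type*} [Fintype V] (G : SimpleGraph V) :
    {k | Covers G k}.Nonempty := by
  classical
  refine ⟨Fintype.card (V × V), ?_⟩
  set e := (Fintype.equivFin (V × V))
  refine ⟨fun m => if h : G.Adj (e.symm m).1 (e.symm m).2
      then SimpleGraph.fromEdgeSet {s((e.symm m).1, (e.symm m).2)} else ⊥,
    fun m => ?_, fun u v huv => ?_⟩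
  · by_cases h : G.Adj (e.symm m).1 (e.symm m).2
    · simp only [dif_pos h]
      constructor
      · intro a b hab
        simp only [SimpleGraph.fromEdgeSet_adj, Set.mem_singleton_iff, Sym2.eq_iff] at hab
        rcases hab.1 with ⟨rfl, rfl⟩ | ⟨rfl, rfl⟩
        · exact h
        · exact h.symm
      · exact isCoInterval_single h.ne
    · simp only [dif_neg h]
      exact ⟨bot_le, isCoInterval_bot⟩
  · refine ⟨e (u, v), ?_⟩
    have h1 : e.symm (e (u, v)) = (u, v) := e.symm_apply_apply _
    simp only [h1]
    rw [dif_pos huv]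
    simp [SimpleGraph.fromEdgeSet_adj, huv.ne]

lemma covers_coboxicity {V : Type*} [Fintype V] (G : SimpleGraph V) :
    Covers G (coboxicity G) :=
  Nat.sInf_mem (covers_nonempty G)

/-! ### Embedding preserves co-intervalness -/

lemma embedG_adj_mk {ι : Type*} {V : ι → Type*} {i : ι} {F : SimpleGraph (V i)}
    {x y : V i} : (embedG i F).Adj ⟨i, x⟩ ⟨i, y⟩ ↔ F.Adj x y := by
  constructor
  · rintro ⟨x', y', h, h1, h2⟩
    obtain ⟨-, hx⟩ := Sigma.mk.inj_iff.mp h1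
    obtain ⟨-, hy⟩ := Sigma.mk.inj_iff.mp h2
    rw [eq_of_heq hx, eq_of_heq hy]
    exact h
  · exact fun h => ⟨x, y, h, rfl, rfl⟩

lemma embedG_not_adj {ι : Type*} {V : ι → Type*} {i : ι} {F : SimpleGraph (V i)}
    {u v : Σ j, V j} (h : u.1 ≠ i ∨ v.1 ≠ i) : ¬ (embedG i F).Adj u v := by
  rintro ⟨x, y, -, rfl, rfl⟩
  simp at h

lemma embedG_le {ι : Type*} {V : ι → Type*} {H : ∀ j, SimpleGraph (V j)} {i : ι}
    {F : SimpleGraph (V i)} (h : F ≤ H i) : embedG i F ≤ sigmaGraph H := by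
  rintro a b ⟨x, y, hxy, rfl, rfl⟩
  exact ⟨i, x, y, h hxy, rfl, rfl⟩

lemma embedG_coInterval {ι : Type*} {V : ι → Type*} (i : ι) [Finite (V i)]
    {F : SimpleGraph (V i)} (h : IsCoIntervalGraph F) :
    IsCoIntervalGraph (embedG i F) := by
  classical
  obtain ⟨a, b, hab, hiff⟩ := h
  obtain ⟨M0, hM0⟩ := Finite.exists_le (fun x : V i => max |a x| |b x|)
  set M : ℝ := max M0 0 with hM
  have hM0' : ∀ x : V i, max |a x| |b x| ≤ M := fun x => (hM0 x).trans (le_max_left _ _)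
  have hMnn : (0:ℝ) ≤ M := le_max_right _ _
  have haM : ∀ x : V i, -M ≤ a x ∧ a x ≤ M :=
    fun x => abs_le.mp ((le_max_left _ _).trans (hM0' x))
  have hbM : ∀ x : V i, -M ≤ b x ∧ b x ≤ M :=
    fun x => abs_le.mp ((le_max_right _ _).trans (hM0' x))
  set A : (Σ j, V j) → ℝ :=
    fun p => if h : p.1 = i then a (cast (congrArg V h) p.2) else -M with hA
  set B : (Σ j, V j) → ℝ :=
    fun p => if h : p.1 = i then b (cast (congrArg V h) p.2) else M with hB
  have hA1 : ∀ x : V i, A ⟨i, x⟩ = a x := fun x => dif_pos rfl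
  have hB1 : ∀ x : V i, B ⟨i, x⟩ = b x := fun x => dif_pos rfl
  have hA2 : ∀ {j : ι} (x : V j), j ≠ i → A ⟨j, x⟩ = -M := fun x hj => dif_neg hj
  have hB2 : ∀ {j : ι} (x : V j), j ≠ i → B ⟨j, x⟩ = M := fun x hj => dif_neg hj
  refine ⟨A, B, ?_, ?_⟩
  · rintro ⟨j, x⟩
    by_cases hj : j = i
    · subst hj; rw [hA1, hB1]; exact hab x
    · rw [hA2 x hj, hB2 x hj]; linarith
  · rintro ⟨j, x⟩ ⟨j', y⟩ huv
    by_cases hj : j = i <;> by_cases hj' : j' = i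
    · subst hj; subst hj'
      have hxy : x ≠ y := fun h => huv (by rw [h])
      rw [hA1, hB1, hA1, hB1]
      simp only [SimpleGraph.compl_adj, embedG_adj_mk]
      rw [← hiff x y hxy]
      simp [SimpleGraph.compl_adj, huv, hxy]
    · subst hj
      rw [hA1, hB1, hA2 y hj', hB2 y hj']
      simp only [SimpleGraph.compl_adj]
      constructor
      · intro _
        rw [icc_inter_nonempty]
        simp only [le_min_iff, max_le_iff]
        constructor <;> constructor <;>
          linarith [hab x, (haM x).1, (haM x).2, (hbM x).1, (hbM x).2]
      · intro _
        exact ⟨huv, embedG_not_adj (Or.inr hj')⟩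
    · subst hj'
      rw [hA2 x hj, hB2 x hj, hA1, hB1]
      simp only [SimpleGraph.compl_adj]
      constructor
      · intro _
        rw [icc_inter_nonempty]
        simp only [le_min_iff, max_le_iff]
        constructor <;> constructor <;>
          linarith [hab y, (haM y).1, (haM y).2, (hbM y).1, (hbM y).2]
      · intro _
        exact ⟨huv, embedG_not_adj (Or.inl hj)⟩
    · rw [hA2 x hj, hB2 x hj, hA2 y hj', hB2 y hj']
      simp only [SimpleGraph.compl_adj]
      constructor
      · intro _
        rw [icc_inter_nonempty]
        simp only [le_min_iff, max_le_iff]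
        constructor <;> constructor <;> linarith
      · intro _
        exact ⟨huv, embedG_not_adj (Or.inl hj)⟩

/-! ### Restriction preserves co-intervalness -/

lemma restrictG_le {ι : Type*} {V : ι → Type*} {H : ∀ j, SimpleGraph (V j)} (i : ι)
    {F : SimpleGraph (Σ j, V j)} (h : F ≤ sigmaGraph H) : restrictG i F ≤ H i := by
  intro x y hxy
  obtain ⟨i', x', y', h', h1, h2⟩ := h hxy
  obtain ⟨hi, hx⟩ := Sigma.mk.inj_iff.mp h1
  subst hi
  obtain ⟨-, hy⟩ := Sigma.mk.inj_iff.mp h2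
  rw [eq_of_heq hx, eq_of_heq hy]
  exact h'

lemma restrictG_coInterval {ι : Type*} {V : ι → Type*} (i : ι)
    {F : SimpleGraph (Σ j, V j)} (h : IsCoIntervalGraph F) :
    IsCoIntervalGraph (restrictG i F) := by
  obtain ⟨a, b, hab, hiff⟩ := h
  refine ⟨fun x => a ⟨i, x⟩, fun x => b ⟨i, x⟩, fun x => hab _, fun x y hxy => ?_⟩
  rw [← hiff ⟨i, x⟩ ⟨i, y⟩ (sigma_mk_ne hxy)]
  simp only [SimpleGraph.compl_adj]
  constructor
  · rintro ⟨-, h2⟩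
    exact ⟨sigma_mk_ne hxy, h2⟩
  · rintro ⟨-, h2⟩
    exact ⟨hxy, h2⟩

/-! ### No induced C4 in interval graphs: the real-numbers core -/

lemma no_c4_real (ax bx ay by' au bu av bv : ℝ)
    (hx : ax ≤ bx) (hy : ay ≤ by') (hu : au ≤ bu) (hv : av ≤ bv)
    (hxu : max ax au ≤ min bx bu) (hxv : max ax av ≤ min bx bv)
    (hyu : max ay au ≤ min by' bu) (hyv : max ay av ≤ min by' bv)
    (hxy : ¬ max ax ay ≤ min bx by') (huv : ¬ max au av ≤ min bu bv) : False := by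
  simp only [max_le_iff, le_min_iff] at hxu hxv hyu hyv
  have h1 : bx < ay ∨ by' < ax := by
    by_contra h
    push_neg at h
    exact hxy (by simp only [max_le_iff, le_min_iff]; exact ⟨⟨hx, h.1⟩, ⟨h.2, hy⟩⟩)
  have h2 : bu < av ∨ bv < au := by
    by_contra h
    push_neg at h
    exact huv (by simp only [max_le_iff, le_min_iff]; exact ⟨⟨hu, h.1⟩, ⟨h.2, hv⟩⟩)
  rcases h1 with h1 | h1 <;> rcases h2 with h2 | h2 <;>
    [linarith [hyu.1.2, hxv.2.1]; linarith [hyv.1.2, hxu.2.1];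
     linarith [hxu.1.2, hyv.2.1]; linarith [hxv.1.2, hyu.2.1]]

/-- A co-interval subgraph of a disjoint union has edges in at most one component. -/
lemma cointerval_one_component {ι : Type*} {V : ι → Type*} {H : ∀ j, SimpleGraph (V j)}
    {F : SimpleGraph (Σ j, V j)} (hle : F ≤ sigmaGraph H) (hci : IsCoIntervalGraph F)
    {i i' : ι} {x y : V i} {u v : V i'}
    (h1 : F.Adj ⟨i, x⟩ ⟨i, y⟩) (h2 : F.Adj ⟨i', u⟩ ⟨i', v⟩) : i = i' := by
  by_contra hii
  obtain ⟨a, b, hab, hiff⟩ := hci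
  -- cross pairs are adjacent in Fᶜ
  have cross : ∀ (p : V i) (q : V i'), Fᶜ.Adj ⟨i, p⟩ ⟨i', q⟩ := by
    intro p q
    refine ⟨sigma_mk_fst_ne hii, fun hadj => ?_⟩
    obtain ⟨i0, x0, y0, -, e1, e2⟩ := hle hadj
    exact hii ((Sigma.mk.inj_iff.mp e1).1.trans (Sigma.mk.inj_iff.mp e2).1.symm)
  have hxy : (⟨i, x⟩ : Σ j, V j) ≠ ⟨i, y⟩ := F.ne_of_adj h1
  have huv : (⟨i', u⟩ : Σ j, V j) ≠ ⟨i', v⟩ := F.ne_of_adj h2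
  have nxy : ¬ Fᶜ.Adj ⟨i, x⟩ ⟨i, y⟩ := by simp [SimpleGraph.compl_adj, h1]
  have nuv : ¬ Fᶜ.Adj ⟨i', u⟩ ⟨i', v⟩ := by simp [SimpleGraph.compl_adj, h2]
  have key : ∀ (p q : Σ j, V j), p ≠ q →
      (Fᶜ.Adj p q ↔ max (a p) (a q) ≤ min (b p) (b q)) := by
    intro p q hpq
    rw [hiff p q hpq, icc_inter_nonempty]
  exact no_c4_real (a ⟨i,x⟩) (b ⟨i,x⟩) (a ⟨i,y⟩) (b ⟨i,y⟩) (a ⟨i',u⟩) (b ⟨i',u⟩)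
    (a ⟨i',v⟩) (b ⟨i',v⟩) (hab _) (hab _) (hab _) (hab _)
    ((key _ _ (sigma_mk_fst_ne hii)).mp (cross x u))
    ((key _ _ (sigma_mk_fst_ne hii)).mp (cross x v))
    ((key _ _ (sigma_mk_fst_ne hii)).mp (cross y u))
    ((key _ _ (sigma_mk_fst_ne hii)).mp (cross y v))
    (fun h => nxy ((key _ _ hxy).mpr h))
    (fun h => nuv ((key _ _ huv).mpr h))

/-! ### The two bounds -/

lemma covers_sum {t : ℕ} {V : Fin t → Type*} [∀ i, Fintype (V i)]
    (H : ∀ i, SimpleGraph (V i)) :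
    Covers (sigmaGraph H) (∑ i, coboxicity (H i)) := by
  classical
  have h : ∀ i, Covers (H i) (coboxicity (H i)) := fun i => covers_coboxicity (H i)
  choose g hg1 hg2 using h
  set e : (Σ i : Fin t, Fin (coboxicity (H i))) ≃ Fin (∑ i, coboxicity (H i)) :=
    Fintype.equivFinOfCardEq (by simp) with he
  refine ⟨fun m => embedG (e.symm m).1 (g (e.symm m).1 (e.symm m).2), fun m => ?_,
    fun uu vv huv => ?_⟩
  · exact ⟨embedG_le (hg1 _ _).1, embedG_coInterval _ (hg1 _ _).2⟩
  · obtain ⟨i, x, y, hxy, rfl, rfl⟩ := huv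
    obtain ⟨m', hm'⟩ := hg2 i x y hxy
    refine ⟨e ⟨i, m'⟩, ?_⟩
    have h1 : e.symm (e ⟨i, m'⟩) = ⟨i, m'⟩ := e.symm_apply_apply _
    show (embedG (e.symm (e ⟨i, m'⟩)).1 (g (e.symm (e ⟨i, m'⟩)).1 (e.symm (e ⟨i, m'⟩)).2)).Adj _ _
    rw [h1]
    exact ⟨x, y, hm', rfl, rfl⟩

lemma sum_le_covers {t : ℕ} {V : Fin t → Type*} [∀ i, Fintype (V i)]
    (H : ∀ i, SimpleGraph (V i)) {k : ℕ} (hk : Covers (sigmaGraph H) k) :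
    ∑ i, coboxicity (H i) ≤ k := by
  classical
  obtain ⟨f, hf1, hf2⟩ := hk
  set T : Fin t → Finset (Fin k) :=
    fun i => Finset.univ.filter (fun j => ∃ x y : V i, (f j).Adj ⟨i, x⟩ ⟨i, y⟩) with hT
  have hdisj : ∀ i ∈ (Finset.univ : Finset (Fin t)), ∀ i' ∈ (Finset.univ : Finset (Fin t)),
      i ≠ i' → Disjoint (T i) (T i') := by
    intro i _ i' _ hii
    rw [Finset.disjoint_left]
    intro j hj hj'
    simp only [hT, Finset.mem_filter] at hj hj'
    obtain ⟨-, x, y, hxy⟩ := hj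
    obtain ⟨-, u, v, huv⟩ := hj'
    exact hii (cointerval_one_component (hf1 j).1 (hf1 j).2 hxy huv)
  have hcob : ∀ i, coboxicity (H i) ≤ (T i).card := by
    intro i
    refine Nat.sInf_le ?_
    set e := (T i).equivFin with he
    refine ⟨fun m => restrictG i (f (e.symm m).1), fun m => ?_, fun x y hxy => ?_⟩
    · exact ⟨restrictG_le i (hf1 _).1, restrictG_coInterval i (hf1 _).2⟩
    · obtain ⟨j, hj⟩ := hf2 ⟨i, x⟩ ⟨i, y⟩ ⟨i, x, y, hxy, rfl, rfl⟩
      have hjT : j ∈ T i := by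
        simp only [hT, Finset.mem_filter]
        exact ⟨Finset.mem_univ _, x, y, hj⟩
      refine ⟨e ⟨j, hjT⟩, ?_⟩
      show (f ((e.symm (e ⟨j, hjT⟩)) : Fin k)).Adj ⟨i, x⟩ ⟨i, y⟩
      rw [Equiv.symm_apply_apply]
      exact hj
  calc ∑ i, coboxicity (H i) ≤ ∑ i, (T i).card := Finset.sum_le_sum (fun i _ => hcob i)
    _ = (Finset.univ.biUnion T).card := (Finset.card_biUnion hdisj).symm
    _ ≤ k := by simpa using Finset.card_le_univ (Finset.univ.biUnion T)


/-- The co-boxicity of a disjoint union is the sum of the co-boxicities. -/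
theorem coboxicity_disjoint_union {t : ℕ} {V : Fin t → Type*} [∀ i, Fintype (V i)]
    (H : ∀ i, SimpleGraph (V i)) :
    coboxicity (sigmaGraph H) = ∑ i, coboxicity (H i) := by
  rw [coboxicity_eq_sInf]
  refine le_antisymm (Nat.sInf_le (covers_sum H)) ?_
  exact le_csInf ⟨_, covers_sum H⟩ (fun k hk => sum_le_covers H hk)
end

section
/- A graph G contains a near-leaf block if and only if it contains an internal block. -/
/-- A vertex set `B` induces a 2-connected subgraph of `G` (where a single vertex or a
single edge counts as 2-connected): the induced graph is connected, and removing any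
single vertex leaves it connected. -/
def IsTwoConnectedSet {V : Type*} (G : SimpleGraph V) (B : Set V) : Prop :=
  B.Nonempty ∧ (G.induce B).Connected ∧
    ∀ v ∈ B, (B \ {v}).Nonempty → (G.induce (B \ {v})).Connected

/-- A block of `G`: a maximal 2-connected vertex set. -/
def IsBlock {V : Type*} (G : SimpleGraph V) (B : Set V) : Prop :=
  IsTwoConnectedSet G B ∧ ∀ B' : Set V, IsTwoConnectedSet G B' → B ⊆ B' → B = B'

/-- `v` is a cut-vertex of `G`: removing `v` disconnects two vertices that were
reachable from each other, i.e. it increases the number of connected components. -/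
def IsCutVertex {V : Type*} (G : SimpleGraph V) (v : V) : Prop :=
  ∃ (a b : V) (ha : a ≠ v) (hb : b ≠ v), G.Reachable a b ∧
    ¬ (G.induce {x : V | x ≠ v}).Reachable ⟨a, ha⟩ ⟨b, hb⟩

/-- A leaf block: a block containing exactly one cut-vertex of `G`. -/
def IsLeafBlock {V : Type*} (G : SimpleGraph V) (B : Set V) : Prop :=
  IsBlock G B ∧ ∃! v : V, v ∈ B ∧ IsCutVertex G v

/-- An internal block: a block containing at least two cut-vertices of `G`. -/
def IsInternalBlock {V : Type*} (G : SimpleGraph V) (B : Set V) : Prop :=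
  IsBlock G B ∧ ∃ u v : V, u ≠ v ∧ u ∈ B ∧ v ∈ B ∧ IsCutVertex G u ∧ IsCutVertex G v

/-- A near-leaf block: an internal block `Q` such that either all internal-block
neighbours of `Q` meet `Q` in one common cut-vertex (the anchor), or all block
neighbours of `Q` are leaf blocks. -/
def IsNearLeafBlock {V : Type*} (G : SimpleGraph V) (Q : Set V) : Prop :=
  IsInternalBlock G Q ∧
    ((∃ a, a ∈ Q ∧ IsCutVertex G a ∧
        ∀ B : Set V, IsInternalBlock G B → B ≠ Q → (B ∩ Q).Nonempty → a ∈ B) ∨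
      (∀ B : Set V, IsBlock G B → B ≠ Q → (B ∩ Q).Nonempty → IsLeafBlock G B))


section NLBAux
open SimpleGraph

variable {V : Type*}

/-- Reachability inside a vertex set: a walk whose support stays in `S`. -/
def ReachIn (G : SimpleGraph V) (S : Set V) (a b : V) : Prop :=
  ∃ p : G.Walk a b, ∀ x ∈ p.support, x ∈ S

namespace ReachIn

lemma refl {G : SimpleGraph V} {S : Set V} {a : V} (ha : a ∈ S) : ReachIn G S a a :=
  ⟨Walk.nil, by simpa using ha⟩

lemma symm {G : SimpleGraph V} {S : Set V} {a b : V} :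
    ReachIn G S a b → ReachIn G S b a := by
  rintro ⟨p, hp⟩
  exact ⟨p.reverse, fun x hx => hp x (by simpa [Walk.support_reverse] using hx)⟩

lemma trans {G : SimpleGraph V} {S : Set V} {a b c : V} :
    ReachIn G S a b → ReachIn G S b c → ReachIn G S a c := by
  rintro ⟨p, hp⟩ ⟨q, hq⟩
  refine ⟨p.append q, fun x hx => ?_⟩
  rw [Walk.support_append, List.mem_append] at hx
  rcases hx with hx | hx
  · exact hp x hx
  · exact hq x (List.mem_of_mem_tail hx)

lemma mono {G : SimpleGraph V} {S T : Set V} {a b : V} (hST : S ⊆ T) :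
    ReachIn G S a b → ReachIn G T a b := by
  rintro ⟨p, hp⟩; exact ⟨p, fun x hx => hST (hp x hx)⟩

end ReachIn

lemma reachIn_of_induce {G : SimpleGraph V} {S : Set V} {a b : V} (ha : a ∈ S) (hb : b ∈ S)
    (h : (G.induce S).Reachable ⟨a, ha⟩ ⟨b, hb⟩) : ReachIn G S a b := by
  obtain ⟨p⟩ := h
  refine ⟨p.map (Embedding.induce S).toHom, fun x hx => ?_⟩
  erw [Walk.support_map, List.mem_map] at hx
  obtain ⟨y, -, rfl⟩ := hx
  exact y.2

lemma induce_reachable_of_reachIn {G : SimpleGraph V} {S : Set V} :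
    ∀ {a b : V} (p : G.Walk a b), (∀ x ∈ p.support, x ∈ S) → ∀ (ha : a ∈ S) (hb : b ∈ S),
      (G.induce S).Reachable ⟨a, ha⟩ ⟨b, hb⟩
  | _, _, Walk.nil, _, _, _ => Reachable.refl _
  | a, b, Walk.cons (v := c) hadj p, h, ha, hb => by
      have hc : c ∈ S := h c (by simp)
      have hstep : (G.induce S).Adj ⟨a, ha⟩ ⟨c, hc⟩ := by
        simpa using hadj
      exact hstep.reachable.trans
        (induce_reachable_of_reachIn p (fun x hx => h x (by simp [hx])) hc hb)

lemma reachIn_of_connected {G : SimpleGraph V} {S : Set V} {a b : V}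
    (h : (G.induce S).Connected) (ha : a ∈ S) (hb : b ∈ S) : ReachIn G S a b :=
  reachIn_of_induce ha hb (h.preconnected _ _)

lemma induce_connected_of_reachIn {G : SimpleGraph V} {S : Set V} {a₀ : V} (ha₀ : a₀ ∈ S)
    (h : ∀ x ∈ S, ReachIn G S x a₀) : (G.induce S).Connected := by
  rw [SimpleGraph.connected_iff]
  refine ⟨fun x y => ?_, ⟨⟨a₀, ha₀⟩⟩⟩
  obtain ⟨px, hpx⟩ := h x.1 x.2
  obtain ⟨py, hpy⟩ := h y.1 y.2
  have h1 := induce_reachable_of_reachIn px hpx x.2 ha₀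
  have h2 := induce_reachable_of_reachIn py hpy y.2 ha₀
  exact h1.trans h2.symm

lemma twoConn_del {G : SimpleGraph V} {B : Set V} (h : IsTwoConnectedSet G B) (u : V)
    (hne : (B \ {u}).Nonempty) : (G.induce (B \ {u})).Connected := by
  by_cases hu : u ∈ B
  · exact h.2.2 u hu hne
  · rw [Set.diff_singleton_eq_self hu]
    exact h.2.1

lemma twoConn_reachIn_del {G : SimpleGraph V} {B : Set V} (h : IsTwoConnectedSet G B) {u a b : V}
    (haB : a ∈ B) (hau : a ≠ u) (hbB : b ∈ B) (hbu : b ≠ u) : ReachIn G (B \ {u}) a b :=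
  reachIn_of_connected (twoConn_del h u ⟨a, haB, hau⟩) ⟨haB, hau⟩ ⟨hbB, hbu⟩

/-- Separation lemma: two distinct blocks sharing `v` are separated by removing `v`. -/
lemma block_sep {G : SimpleGraph V} {B Q : Set V} {v b q : V}
    (hB : IsBlock G B) (hQ : IsBlock G Q) (hne : B ≠ Q)
    (hvB : v ∈ B) (hvQ : v ∈ Q) (hbB : b ∈ B) (hbv : b ≠ v)
    (hqQ : q ∈ Q) (hqv : q ≠ v) :
    ¬ ReachIn G {x | x ≠ v} b q := by
  classical
  rintro ⟨W0, hW0⟩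
  set P := W0.bypass with hPdef
  have hPpath : P.IsPath := W0.bypass_isPath
  have hPv : ∀ x ∈ P.support, x ≠ v := fun x hx => hW0 x (W0.support_bypass_subset hx)
  set T : Set V := (B ∪ Q) ∪ {x | x ∈ P.support} with hT
  have hBsub : B ⊆ T := fun x hx => Or.inl (Or.inl hx)
  have hQsub : Q ⊆ T := fun x hx => Or.inl (Or.inr hx)
  have hPsub : {x | x ∈ P.support} ⊆ T := fun x hx => Or.inr hx
  have hbP : b ∈ P.support := P.start_mem_support
  have hqP : q ∈ P.support := P.end_mem_support
  -- reach within supports of prefix walks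
  have hreachP : ∀ x (hx : x ∈ P.support), ReachIn G {y | y ∈ P.support} x b := by
    intro x hx
    exact ⟨(P.takeUntil x hx).reverse, fun y hy => by
      rw [Walk.support_reverse, List.mem_reverse] at hy
      exact P.support_takeUntil_subset hx hy⟩
  have hTconn : IsTwoConnectedSet G T := by
    refine ⟨⟨v, hBsub hvB⟩, ?_, ?_⟩
    · refine induce_connected_of_reachIn (hBsub hvB) ?_
      rintro x (hx | hx)
      · rcases hx with hx | hx
        · exact (reachIn_of_connected hB.1.2.1 hx hvB).mono hBsub
        · exact (reachIn_of_connected hQ.1.2.1 hx hvQ).mono hQsub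
      · refine ReachIn.trans (((hreachP x hx).mono hPsub)) ?_
        exact (reachIn_of_connected hB.1.2.1 hbB hvB).mono hBsub
    · intro u huT hTu
      by_cases hu : u = v
      · subst hu
        refine induce_connected_of_reachIn (a₀ := b) ⟨hBsub hbB, hbv⟩ ?_
        have hPTu : {y | y ∈ P.support} ⊆ T \ {u} := fun y hy => ⟨hPsub hy, hPv y hy⟩
        rintro x ⟨hx | hx, hxu⟩
        · rcases hx with hx | hx
          · exact (twoConn_reachIn_del hB.1 hx hxu hbB hbv).mono
              (Set.diff_subset_diff_left hBsub)
          · refine ReachIn.trans ((twoConn_reachIn_del hQ.1 hx hxu hqQ hqv).mono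
              (Set.diff_subset_diff_left hQsub)) ?_
            exact ((hreachP q hqP).mono hPTu)
        · exact ((hreachP x hx).mono hPTu)
      · have hvu : v ≠ u := fun e => hu e.symm
        refine induce_connected_of_reachIn (a₀ := v) ⟨hBsub hvB, hvu⟩ ?_
        rintro x ⟨hx | hx, hxu⟩
        · rcases hx with hx | hx
          · exact (twoConn_reachIn_del hB.1 hx hxu hvB hvu).mono
              (Set.diff_subset_diff_left hBsub)
          · exact (twoConn_reachIn_del hQ.1 hx hxu hvQ hvu).mono
              (Set.diff_subset_diff_left hQsub)
        · -- x on the path, x ≠ u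
          by_cases hu' : u ∈ (P.takeUntil x hx).support
          · -- then u is not on the drop part
            have hdrop : u ∉ (P.dropUntil x hx).support := by
              have hnd : P.support.Nodup := hPpath.support_nodup
              have hspl : P.support
                  = (P.takeUntil x hx).support ++ (P.dropUntil x hx).support.tail := by
                conv_lhs => rw [← Walk.take_spec P hx]
                rw [Walk.support_append]
              rw [hspl] at hnd
              have hdisj := List.disjoint_of_nodup_append hnd
              intro hmem
              rw [Walk.support_eq_cons, List.mem_cons] at hmem
              rcases hmem with hmem | hmem
              · exact hxu hmem.symm
              · exact hdisj hu' hmem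
            have hxq : ReachIn G (T \ {u}) x q := by
              refine ⟨P.dropUntil x hx, fun y hy => ?_⟩
              refine ⟨hPsub (P.support_dropUntil_subset hx hy), ?_⟩
              intro e; exact hdrop (e ▸ hy)
            refine hxq.trans ?_
            have hqu : q ≠ u := fun e => hdrop (e ▸ (P.dropUntil x hx).end_mem_support)
            exact (twoConn_reachIn_del hQ.1 hqQ hqu hvQ hvu).mono
              (Set.diff_subset_diff_left hQsub)
          · -- u not on the take part: go to b
            have hxb : ReachIn G (T \ {u}) x b := by
              refine ⟨(P.takeUntil x hx).reverse, fun y hy => ?_⟩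
              rw [Walk.support_reverse, List.mem_reverse] at hy
              refine ⟨hPsub (P.support_takeUntil_subset hx hy), ?_⟩
              intro e; exact hu' (e ▸ hy)
            refine hxb.trans ?_
            have hbu : b ≠ u := fun e => hu' (e ▸ (P.takeUntil x hx).start_mem_support)
            exact (twoConn_reachIn_del hB.1 hbB hbu hvB hvu).mono
              (Set.diff_subset_diff_left hBsub)
  have hBT : B = T := hB.2 T hTconn hBsub
  have hQB : Q = B := hQ.2 B hB.1 (by rw [hBT]; exact hQsub)
  exact hne hQB.symm

lemma block_exists_ne {G : SimpleGraph V} {B Q : Set V} {v : V}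
    (hB : IsBlock G B) (hQ : IsBlock G Q) (hne : B ≠ Q) (hvB : v ∈ B) (hvQ : v ∈ Q) :
    ∃ b ∈ B, b ≠ v := by
  by_contra h
  push_neg at h
  have hsub : B ⊆ Q := fun x hx => by rw [h x hx]; exact hvQ
  exact hne (hB.2 Q hQ.1 hsub)

lemma cut_of_two_blocks {G : SimpleGraph V} {B Q : Set V} {v : V}
    (hB : IsBlock G B) (hQ : IsBlock G Q) (hne : B ≠ Q) (hvB : v ∈ B) (hvQ : v ∈ Q) :
    IsCutVertex G v := by
  obtain ⟨b, hbB, hbv⟩ := block_exists_ne hB hQ hne hvB hvQ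
  obtain ⟨q, hqQ, hqv⟩ := block_exists_ne hQ hB hne.symm hvQ hvB
  refine ⟨b, q, hbv, hqv, ?_, ?_⟩
  · obtain ⟨p1, -⟩ := reachIn_of_connected hB.1.2.1 hbB hvB
    obtain ⟨p2, -⟩ := reachIn_of_connected hQ.1.2.1 hvQ hqQ
    exact ⟨p1.append p2⟩
  · intro h
    exact block_sep hB hQ hne hvB hvQ hbB hbv hqQ hqv (reachIn_of_induce hbv hqv h)

/-- The set of vertices separated from `Q \ {v}` by removing `v`. -/
def FarSet (G : SimpleGraph V) (Q : Set V) (v : V) : Set V :=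
  {x | x ≠ v ∧ ∀ q ∈ Q, q ≠ v → ¬ ReachIn G {y | y ≠ v} x q}

lemma far_step {G : SimpleGraph V} {Q B C : Set V} {v w : V}
    (hQ : IsBlock G Q) (hB : IsBlock G B) (hC : IsBlock G C)
    (hQB : Q ≠ B) (hBC : B ≠ C) (hvQ : v ∈ Q) (hvB : v ∈ B)
    (hwB : w ∈ B) (hwC : w ∈ C) (hwv : w ≠ v) :
    FarSet G B w ⊂ FarSet G Q v := by
  have hwFar : w ∈ FarSet G Q v := by
    refine ⟨hwv, fun q hqQ hqv => ?_⟩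
    exact block_sep hB hQ hQB.symm hvB hvQ hwB hwv hqQ hqv
  have hsub : FarSet G B w ⊆ FarSet G Q v := by
    rintro x ⟨hxw, hx2⟩
    have hxv : x ≠ v := by
      intro e
      refine hx2 v hvB (Ne.symm hwv) ?_
      rw [e]
      exact ReachIn.refl (show v ∈ {y | y ≠ w} from Ne.symm hwv)
    refine ⟨hxv, fun q hqQ hqv => ?_⟩
    rintro ⟨W, hW⟩
    by_cases hw : w ∈ W.support
    · classical
      refine block_sep hB hQ hQB.symm hvB hvQ hwB hwv hqQ hqv
        ⟨W.dropUntil w hw, fun y hy => hW y (W.support_dropUntil_subset hw hy)⟩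
    · have hwQ : w ∉ Q := by
        intro hwQ
        exact block_sep hB hQ hQB.symm hvB hvQ hwB hwv hwQ hwv (ReachIn.refl hwv)
      have hxq : ReachIn G {y | y ≠ w} x q :=
        ⟨W, fun y hy => fun e => hw (e ▸ hy)⟩
      have hqv' : ReachIn G {y | y ≠ w} q v :=
        (reachIn_of_connected hQ.1.2.1 hqQ hvQ).mono
          (fun y hy => fun e => hwQ (e ▸ hy))
      exact hx2 v hvB (fun e => hwv e.symm) (hxq.trans hqv')
  refine (Set.ssubset_iff_of_subset hsub).2 ⟨w, hwFar, fun h => h.1 rfl⟩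

lemma descend_step {G : SimpleGraph V} (hcon : ∀ R : Set V, ¬ IsNearLeafBlock G R)
    {Q B : Set V} {v : V} (hQ : IsBlock G Q) (hB : IsInternalBlock G B) (hne : Q ≠ B)
    (hvQ : v ∈ Q) (hvB : v ∈ B) :
    ∃ (C : Set V) (w : V), IsInternalBlock G C ∧ B ≠ C ∧ w ∈ B ∧ w ∈ C ∧
      FarSet G B w ⊂ FarSet G Q v := by
  have hcut : IsCutVertex G v := cut_of_two_blocks hQ hB.1 hne hvQ hvB
  have hn1 : ¬ ∃ a, a ∈ B ∧ IsCutVertex G a ∧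
      ∀ B' : Set V, IsInternalBlock G B' → B' ≠ B → (B' ∩ B).Nonempty → a ∈ B' :=
    fun hd => hcon B ⟨hB, Or.inl hd⟩
  push_neg at hn1
  obtain ⟨C, hC, hCB, ⟨w, hwC, hwB⟩, hvC⟩ := hn1 v hvB hcut
  have hwv : w ≠ v := fun e => hvC (e ▸ hwC)
  exact ⟨C, w, hC, hCB.symm, hwB, hwC,
    far_step hQ hB.1 hC.1 hne hCB.symm hvQ hvB hwB hwC hwv⟩

lemma descent {G : SimpleGraph V} [Fintype V] (hcon : ∀ R : Set V, ¬ IsNearLeafBlock G R) :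
    ∀ (n : ℕ) (Q B : Set V) (v : V), IsBlock G Q → IsInternalBlock G B → Q ≠ B →
      v ∈ Q → v ∈ B → (FarSet G Q v).ncard ≤ n → False := by
  intro n
  induction n with
  | zero =>
    intro Q B v hQ hB hne hvQ hvB hcard
    obtain ⟨C, w, hC, hBC, hwB, hwC, hlt⟩ := descend_step hcon hQ hB hne hvQ hvB
    have := Set.ncard_lt_ncard hlt (Set.toFinite _)
    omega
  | succ n ih =>
    intro Q B v hQ hB hne hvQ hvB hcard
    obtain ⟨C, w, hC, hBC, hwB, hwC, hlt⟩ := descend_step hcon hQ hB hne hvQ hvB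
    have := Set.ncard_lt_ncard hlt (Set.toFinite _)
    exact ih B C w hB.1 hC hBC hwB hwC (by omega)

end NLBAux

/-- A graph contains a near-leaf block iff it contains an internal block. -/
theorem nearLeafBlock_iff_internalBlock {V : Type*} [Fintype V] (G : SimpleGraph V) :
    (∃ Q : Set V, IsNearLeafBlock G Q) ↔ (∃ Q : Set V, IsInternalBlock G Q) := by
  constructor
  · rintro ⟨Q, hQ⟩
    exact ⟨Q, hQ.1⟩
  · rintro ⟨Q0, hQ0⟩
    by_contra hcon
    push_neg at hcon
    obtain ⟨u, u', huu', huQ, -, hucut, -⟩ := hQ0.2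
    have hn1 : ¬ ∃ a, a ∈ Q0 ∧ IsCutVertex G a ∧
        ∀ B' : Set V, IsInternalBlock G B' → B' ≠ Q0 → (B' ∩ Q0).Nonempty → a ∈ B' :=
      fun hd => hcon Q0 ⟨hQ0, Or.inl hd⟩
    push_neg at hn1
    obtain ⟨B1, hB1, hB1ne, ⟨w, hwB1, hwQ0⟩, -⟩ := hn1 u huQ hucut
    exact descent hcon (FarSet G Q0 w).ncard Q0 B1 w hQ0.1 hB1 hB1ne.symm hwQ0 hwB1 le_rfl
end

section
/- For any graph G, any clique Q in G, and any vertices u, v ∈ V(Q), the big ant Q_{u,v} = (V(Q) ∪ N_G(u) ∪ N_G(v), E(Q) ∪ δ_G(u) ∪ δ_G(v)) is a co-interval graph. -/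
/-- The big ant `Q_{u,v}`: the subgraph of `G` with edges `E(Q) ∪ δ_G(u) ∪ δ_G(v)`. -/
def bigAnt {V : Type*} (G : SimpleGraph V) (Q : Set V) (u v : V) : SimpleGraph V where
  Adj a b := G.Adj a b ∧ ((a ∈ Q ∧ b ∈ Q) ∨ a = u ∨ b = u ∨ a = v ∨ b = v)
  symm := by
    constructor
    rintro a b ⟨h1, h2⟩
    exact ⟨h1.symm, by tauto⟩
  loopless := ⟨fun a h => G.irrefl h.1⟩

set_option maxHeartbeats 3200000 in
/-- For a clique `Q` in `G` and `u, v ∈ Q`, the big ant `Q_{u,v}` is a co-interval graph. -/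
theorem bigAnt_isCoInterval {V : Type*} [Fintype V] (G : SimpleGraph V) (Q : Set V)
    (hQ : G.IsClique Q) (u v : V) (hu : u ∈ Q) (hv : v ∈ Q) :
    IsCoIntervalGraph (bigAnt G Q u v) := by
  classical
  obtain ⟨f, hf1, hf2, hfinj⟩ :
      ∃ f : V → ℝ, (∀ x, 1 < f x) ∧ (∀ x, f x < 2) ∧ Function.Injective f := by
    refine ⟨fun x => 1 + 1/(((Fintype.equivFin V x : ℕ) : ℝ) + 2), ?_, ?_, ?_⟩
    · intro x
      have : (0:ℝ) < ((Fintype.equivFin V x : ℕ) : ℝ) + 2 := by positivity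
      have := one_div_pos.mpr this
      linarith
    · intro x
      have h : (0:ℝ) ≤ ((Fintype.equivFin V x : ℕ) : ℝ) := Nat.cast_nonneg _
      have : 1/(((Fintype.equivFin V x : ℕ) : ℝ) + 2) < 1 := by
        rw [div_lt_one (by linarith)]; linarith
      linarith
    · intro x y h
      have hx : (0:ℝ) < ((Fintype.equivFin V x : ℕ) : ℝ) + 2 := by positivity
      have hy : (0:ℝ) < ((Fintype.equivFin V y : ℕ) : ℝ) + 2 := by positivity
      have h2 : ((Fintype.equivFin V x : ℕ) : ℝ) = ((Fintype.equivFin V y : ℕ) : ℝ) := by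
        field_simp at h; linarith
      have h3 : (Fintype.equivFin V x : ℕ) = (Fintype.equivFin V y : ℕ) :=
        Nat.cast_injective h2
      exact (Fintype.equivFin V).injective (Fin.ext h3)
  refine ⟨fun x => if x = u then 0 else if x = v then 3 else if x ∈ Q then f x
          else if G.Adj x u then 1/2 else 0,
         fun x => if x = u then 0 else if x = v then 3 else if x ∈ Q then f x
          else if G.Adj x v then 5/2 else 3, ?_, ?_⟩
  · intro x
    simp only []
    split_ifs <;> norm_num
  · intro x y hxy
    rw [SimpleGraph.compl_adj, and_iff_right hxy]
    simp only []
    simp only [bigAnt, Set.Icc_inter_Icc, Set.nonempty_Icc, le_min_iff, max_le_iff]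
    split_ifs
    all_goals
      first
      | (refine iff_of_true ?_ ?_
         · rintro ⟨hadj, hc⟩
           simp_all [SimpleGraph.adj_comm]
         · refine ⟨⟨?_, ?_⟩, ?_, ?_⟩ <;>
             linarith [hf1 x, hf2 x, hf1 y, hf2 y])
      | (refine iff_of_false (not_not_intro ⟨?_, by tauto⟩) ?_
         · first
           | (have hxQ : x ∈ Q := by simp_all
              have hyQ : y ∈ Q := by simp_all
              exact hQ hxQ hyQ hxy)
           | simp_all [SimpleGraph.adj_comm]
         · rintro ⟨⟨h1, h2⟩, h3, h4⟩
           first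
           | linarith [hf1 x, hf2 x, hf1 y, hf2 y]
           | exact hxy (hfinj (le_antisymm h3 h2)))
end

section
/- In a block graph G, every maximal threshold subgraph of G is a big ant Q_u for some block Q of G and vertex u ∈ V(Q). -/
/-- A threshold graph, via the forbidden-induced-subgraph characterization:
a graph with no induced `2K₂`, `P₄`, or `C₄`. -/
def IsThresholdGraph {V : Type*} (G : SimpleGraph V) : Prop :=
  (¬ ∃ a b c d : V, a ≠ b ∧ a ≠ c ∧ a ≠ d ∧ b ≠ c ∧ b ≠ d ∧ c ≠ d ∧
    G.Adj a b ∧ G.Adj c d ∧ ¬G.Adj a c ∧ ¬G.Adj a d ∧ ¬G.Adj b c ∧ ¬G.Adj b d) ∧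
  (¬ ∃ a b c d : V, a ≠ b ∧ a ≠ c ∧ a ≠ d ∧ b ≠ c ∧ b ≠ d ∧ c ≠ d ∧
    G.Adj a b ∧ G.Adj b c ∧ G.Adj c d ∧ ¬G.Adj a c ∧ ¬G.Adj a d ∧ ¬G.Adj b d) ∧
  (¬ ∃ a b c d : V, a ≠ b ∧ a ≠ c ∧ a ≠ d ∧ b ≠ c ∧ b ≠ d ∧ c ≠ d ∧
    G.Adj a b ∧ G.Adj b c ∧ G.Adj c d ∧ G.Adj d a ∧ ¬G.Adj a c ∧ ¬G.Adj b d)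
/-- A block graph: every block is a clique. -/
def IsBlockGraph {V : Type*} (G : SimpleGraph V) : Prop :=
  ∀ B : Set V, IsBlock G B → G.IsClique B


section Aux

open SimpleGraph

variable {V : Type*}

lemma clique_induce_connected (G : SimpleGraph V) {S : Set V} (hS : G.IsClique S)
    (hne : S.Nonempty) : (G.induce S).Connected := by
  haveI : Nonempty ↥S := ⟨⟨hne.choose, hne.choose_spec⟩⟩
  refine ⟨fun a b => ?_⟩
  rcases eq_or_ne a b with rfl | h
  · exact SimpleGraph.Reachable.refl a
  · exact SimpleGraph.Adj.reachable (hS a.2 b.2 (Subtype.coe_ne_coe.mpr h))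

lemma clique_twoConnected (G : SimpleGraph V) {S : Set V} (hS : G.IsClique S)
    (hne : S.Nonempty) : IsTwoConnectedSet G S :=
  ⟨hne, clique_induce_connected G hS hne,
    fun _ _ hne' => clique_induce_connected G (hS.subset Set.diff_subset) hne'⟩

lemma exists_block_superset [Fintype V] (G : SimpleGraph V) {S : Set V}
    (hS : IsTwoConnectedSet G S) : ∃ Q, IsBlock G Q ∧ S ⊆ Q := by
  classical
  obtain ⟨Q, ⟨hQ2, hSQ⟩, hmaxQ⟩ :=
    Set.Finite.exists_maximalFor id {T : Set V | IsTwoConnectedSet G T ∧ S ⊆ T}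
      (Set.toFinite _) ⟨S, hS, subset_rfl⟩
  refine ⟨Q, ⟨hQ2, fun B' hB' hQB' => ?_⟩, hSQ⟩
  exact Set.Subset.antisymm hQB' (hmaxQ ⟨hB', hSQ.trans hQB'⟩ hQB')

lemma twoConnected_union (G : SimpleGraph V) {A B : Set V}
    (hA : IsTwoConnectedSet G A) (hB : IsTwoConnectedSet G B)
    {x y : V} (hxy : x ≠ y) (hxA : x ∈ A) (hxB : x ∈ B) (hyA : y ∈ A) (hyB : y ∈ B) :
    IsTwoConnectedSet G (A ∪ B) := by
  refine ⟨⟨x, Or.inl hxA⟩, SimpleGraph.induce_union_connected hA.2.1.preconnected hB.2.1.preconnected ⟨x, hxA, hxB⟩, ?_⟩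
  intro v hv hne
  obtain ⟨z, hzA, hzB, hzv⟩ : ∃ z, z ∈ A ∧ z ∈ B ∧ z ≠ v := by
    rcases eq_or_ne x v with rfl | h
    · exact ⟨y, hyA, hyB, fun h' => hxy h'.symm⟩
    · exact ⟨x, hxA, hxB, h⟩
  have key : ∀ C : Set V, IsTwoConnectedSet G C → z ∈ C → (G.induce (C \ {v})).Connected := by
    intro C hC hzC
    by_cases hvC : v ∈ C
    · exact hC.2.2 v hvC ⟨z, hzC, hzv⟩
    · have hCv : C \ {v} = C := by
        ext w
        simp only [Set.mem_diff, Set.mem_singleton_iff]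
        exact ⟨fun h => h.1, fun h => ⟨h, fun h' => hvC (h' ▸ h)⟩⟩
      rw [hCv]; exact hC.2.1
  have hd : (A ∪ B) \ {v} = (A \ {v}) ∪ (B \ {v}) := Set.union_diff_distrib
  rw [hd]
  exact SimpleGraph.induce_union_connected (key A hA hzA).preconnected (key B hB hzB).preconnected
    ⟨z, ⟨hzA, hzv⟩, hzB, hzv⟩

lemma blocks_eq (G : SimpleGraph V) {Q₁ Q₂ : Set V}
    (h1 : IsBlock G Q₁) (h2 : IsBlock G Q₂) {x y : V} (hxy : x ≠ y)
    (hx1 : x ∈ Q₁) (hx2 : x ∈ Q₂) (hy1 : y ∈ Q₁) (hy2 : y ∈ Q₂) : Q₁ = Q₂ := by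
  have hu := twoConnected_union G h1.1 h2.1 hxy hx1 hx2 hy1 hy2
  have e1 := h1.2 _ hu Set.subset_union_left
  have e2 := h2.2 _ hu Set.subset_union_right
  exact e1.trans e2.symm

/-- In a threshold graph, an edge both of whose endpoints are non-neighbors of a
maximum-degree vertex `u` (and differ from `u`) is impossible. -/
lemma threshold_no_far_edge [Fintype V] {H : SimpleGraph V} [DecidableRel H.Adj]
    (hth : IsThresholdGraph H) {u : V} (hdeg : ∀ v, H.degree v ≤ H.degree u)
    {x y : V} (hxy : H.Adj x y) (hux : ¬ H.Adj u x) (huy : ¬ H.Adj u y) : False := by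
  classical
  have hxu : x ≠ u := fun h => huy (h ▸ hxy)
  have hyu : y ≠ u := fun h => hux (h ▸ hxy.symm)
  have key : ∀ w ∈ H.neighborFinset u, H.Adj w x ∧ H.Adj w y := by
    intro w hw
    have huw : H.Adj u w := (H.mem_neighborFinset u w).mp hw
    have hwx' : w ≠ x := fun h => hux (h ▸ huw)
    have hwy' : w ≠ y := fun h => huy (h ▸ huw)
    have hor : H.Adj w x ∨ H.Adj w y := by
      by_contra hc
      push_neg at hc
      exact hth.1 ⟨u, w, x, y, huw.ne, Ne.symm hxu, Ne.symm hyu, hwx', hwy', hxy.ne,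
        huw, hxy, hux, huy, hc.1, hc.2⟩
    rcases hor with hwx | hwy
    · refine ⟨hwx, ?_⟩
      by_contra hwy
      exact hth.2.1 ⟨u, w, x, y, huw.ne, Ne.symm hxu, Ne.symm hyu, hwx', hwy', hxy.ne,
        huw, hwx, hxy, hux, huy, hwy⟩
    · refine ⟨?_, hwy⟩
      by_contra hwx
      exact hth.2.1 ⟨u, w, y, x, huw.ne, Ne.symm hyu, Ne.symm hxu, hwy', hwx', hxy.ne.symm,
        huw, hwy, hxy.symm, huy, hux, hwx⟩
  have hsub : insert y (H.neighborFinset u) ⊆ H.neighborFinset x := by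
    intro w hw
    rcases Finset.mem_insert.mp hw with rfl | hw
    · exact (H.mem_neighborFinset x w).mpr hxy
    · exact (H.mem_neighborFinset x w).mpr (key w hw).1.symm
  have hynm : y ∉ H.neighborFinset u := fun h => huy ((H.mem_neighborFinset u y).mp h)
  have hcard : H.degree u + 1 ≤ H.degree x := by
    have := Finset.card_le_card hsub
    rwa [Finset.card_insert_of_notMem hynm] at this
  have := hdeg x
  omega

/-- In a threshold graph, a maximum-degree vertex is adjacent to both endpoints of
every edge not incident to it. -/
lemma threshold_dominates [Fintype V] {H : SimpleGraph V} [DecidableRel H.Adj]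
    (hth : IsThresholdGraph H) {u : V} (hdeg : ∀ v, H.degree v ≤ H.degree u)
    {x y : V} (hxy : H.Adj x y) (hx : x ≠ u) (hy : y ≠ u) : H.Adj u x ∧ H.Adj u y := by
  classical
  have half : ∀ a b : V, H.Adj a b → a ≠ u → b ≠ u → H.Adj u a → H.Adj u b := by
    intro a b hab ha hb hua
    by_contra hub
    have hsub : insert b (insert u ((H.neighborFinset u).erase a)) ⊆ H.neighborFinset a := by
      intro w hw
      rcases Finset.mem_insert.mp hw with rfl | hw
      · exact (H.mem_neighborFinset a w).mpr hab
      rcases Finset.mem_insert.mp hw with rfl | hw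
      · exact (H.mem_neighborFinset a w).mpr hua.symm
      have hwa : w ≠ a := Finset.ne_of_mem_erase hw
      have huw : H.Adj u w := (H.mem_neighborFinset u w).mp (Finset.mem_of_mem_erase hw)
      have hwb : w ≠ b := fun h => hub (h ▸ huw)
      refine (H.mem_neighborFinset a w).mpr ?_
      by_contra haw
      by_cases hwbadj : H.Adj w b
      · -- C4 : u - w - b - a - u
        exact hth.2.2 ⟨u, w, b, a, huw.ne, Ne.symm hb, Ne.symm ha, hwb, hwa, (hab.ne).symm,
          huw, hwbadj, hab.symm, hua.symm, hub, fun h => haw h.symm⟩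
      · -- P4 : b - a - u - w
        exact hth.2.1 ⟨b, a, u, w, hab.ne.symm, hb, hwb.symm, ha, hwa.symm, huw.ne,
          hab.symm, hua.symm, huw, fun h => hub h.symm, fun h => hwbadj h.symm, haw⟩
    have hanm : a ∈ H.neighborFinset u := (H.mem_neighborFinset u a).mpr hua
    have hbnm : b ∉ insert u ((H.neighborFinset u).erase a) := by
      intro h
      rcases Finset.mem_insert.mp h with rfl | h
      · exact hb rfl
      · exact hub ((H.mem_neighborFinset u b).mp (Finset.mem_of_mem_erase h))
    have hunm : u ∉ (H.neighborFinset u).erase a := by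
      intro h
      exact H.irrefl ((H.mem_neighborFinset u u).mp (Finset.mem_of_mem_erase h))
    have hpos : 1 ≤ (H.neighborFinset u).card := Finset.card_pos.mpr ⟨a, hanm⟩
    have hcard : H.degree u + 1 ≤ H.degree a := by
      have hc := Finset.card_le_card hsub
      rw [Finset.card_insert_of_notMem hbnm, Finset.card_insert_of_notMem hunm,
        Finset.card_erase_of_mem hanm] at hc
      have : H.degree a = (H.neighborFinset a).card := rfl
      have hdu : H.degree u = (H.neighborFinset u).card := rfl
      omega
    have := hdeg a
    omega
  by_cases hux : H.Adj u x
  · exact ⟨hux, half x y hxy hx hy hux⟩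
  by_cases huy : H.Adj u y
  · exact ⟨half y x hxy.symm hy hx huy, huy⟩
  exact absurd (threshold_no_far_edge hth hdeg hxy hux huy) (fun h => h)

lemma bigAnt_le (G : SimpleGraph V) (Q : Set V) (u : V) : bigAnt G Q u u ≤ G :=
  fun _ _ h => h.1

lemma bigAnt_adj_cases (G : SimpleGraph V) {Q : Set V} {u : V} (hu : u ∈ Q) {a b : V}
    (h : (bigAnt G Q u u).Adj a b) :
    (a ∈ Q ∧ b ∈ Q) ∨ (a = u ∧ b ∉ Q) ∨ (b = u ∧ a ∉ Q) := by
  classical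
  obtain ⟨-, hc⟩ := h
  by_cases haQ : a ∈ Q <;> by_cases hbQ : b ∈ Q
  · exact Or.inl ⟨haQ, hbQ⟩
  · rcases hc with ⟨-, h⟩ | rfl | rfl | rfl | rfl
    · exact absurd h hbQ
    · exact Or.inr (Or.inl ⟨rfl, hbQ⟩)
    · exact absurd hu hbQ
    · exact Or.inr (Or.inl ⟨rfl, hbQ⟩)
    · exact absurd hu hbQ
  · rcases hc with ⟨h, -⟩ | rfl | rfl | rfl | rfl
    · exact absurd h haQ
    · exact absurd hu haQ
    · exact Or.inr (Or.inr ⟨rfl, haQ⟩)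
    · exact absurd hu haQ
    · exact Or.inr (Or.inr ⟨rfl, haQ⟩)
  · exfalso
    rcases hc with ⟨h, -⟩ | rfl | rfl | rfl | rfl
    · exact haQ h
    · exact haQ hu
    · exact hbQ hu
    · exact haQ hu
    · exact hbQ hu

lemma bigAnt_adj_of_mem (G : SimpleGraph V) {Q : Set V} (hQ : G.IsClique Q) {u : V} {a b : V}
    (ha : a ∈ Q) (hb : b ∈ Q) (hab : a ≠ b) : (bigAnt G Q u u).Adj a b :=
  ⟨hQ ha hb hab, Or.inl ⟨ha, hb⟩⟩

lemma bigAnt_threshold (G : SimpleGraph V) {Q : Set V} (hQ : G.IsClique Q) {u : V}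
    (hu : u ∈ Q) : IsThresholdGraph (bigAnt G Q u u) := by
  set K := bigAnt G Q u u with hK
  have adjQ : ∀ a b : V, a ∈ Q → b ∈ Q → a ≠ b → K.Adj a b :=
    fun a b ha hb hab => bigAnt_adj_of_mem G hQ ha hb hab
  have cases' : ∀ a b : V, K.Adj a b →
      (a ∈ Q ∧ b ∈ Q) ∨ (a = u ∧ b ∉ Q) ∨ (b = u ∧ a ∉ Q) :=
    fun a b h => bigAnt_adj_cases G hu h
  refine ⟨?_, ?_, ?_⟩
  · rintro ⟨a, b, c, d, dab, dac, dad, dbc, dbd, dcd, Hab, Hcd, nac, nad, nbc, nbd⟩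
    rcases cases' a b Hab with ⟨haQ, hbQ⟩ | ⟨rfl, hbQ⟩ | ⟨rfl, haQ⟩ <;>
      rcases cases' c d Hcd with ⟨hcQ, hdQ⟩ | ⟨rfl, hdQ⟩ | ⟨rfl, hcQ⟩
    · exact nac (adjQ a c haQ hcQ dac)
    · exact nac (adjQ a c haQ hu dac)
    · exact nad (adjQ a d haQ hu dad)
    · exact nac (adjQ a c hu hcQ dac)
    · exact dac rfl
    · exact dad rfl
    · exact nbc (adjQ b c hu hcQ dbc)
    · exact dbc rfl
    · exact dbd rfl
  · rintro ⟨a, b, c, d, dab, dac, dad, dbc, dbd, dcd, Hab, Hbc, Hcd, nac, nad, nbd⟩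
    rcases cases' b c Hbc with ⟨hbQ, hcQ⟩ | ⟨rfl, hcQ⟩ | ⟨rfl, hbQ⟩
    · rcases cases' a b Hab with ⟨haQ, -⟩ | ⟨rfl, hbQ'⟩ | ⟨rfl, haQ⟩
      · exact nac (adjQ a c haQ hcQ dac)
      · exact hbQ' hbQ
      · rcases cases' c d Hcd with ⟨-, hdQ⟩ | ⟨rfl, hdQ⟩ | ⟨rfl, hcQ'⟩
        · exact nbd (adjQ b d hu hdQ dbd)
        · exact dbc rfl
        · exact hcQ' hcQ
    · rcases cases' c d Hcd with ⟨hcQ', -⟩ | ⟨rfl, hdQ⟩ | ⟨rfl, hcQ'⟩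
      · exact hcQ hcQ' 
      · exact dbc rfl
      · exact dbd rfl
    · rcases cases' a b Hab with ⟨-, hbQ'⟩ | ⟨rfl, -⟩ | ⟨rfl, haQ⟩
      · exact hbQ hbQ'
      · exact dac rfl
      · exact hbQ hu
  · rintro ⟨a, b, c, d, dab, dac, dad, dbc, dbd, dcd, Hab, Hbc, Hcd, Hda, nac, nbd⟩
    have memQ : ∀ p q r : V, K.Adj p q → K.Adj p r → q ≠ r → p ∈ Q := by
      intro p q r h1 h2 hqr
      rcases cases' p q h1 with ⟨hpQ, -⟩ | ⟨rfl, -⟩ | ⟨hq, hpQ'⟩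
      · exact hpQ
      · exact hu
      rcases cases' p r h2 with ⟨hpQ, -⟩ | ⟨rfl, -⟩ | ⟨hr, -⟩
      · exact hpQ
      · exact hu
      · exact absurd (hq.trans hr.symm) hqr
    have haQ : a ∈ Q := memQ a b d Hab Hda.symm dbd
    have hcQ : c ∈ Q := memQ c b d Hbc.symm Hcd dbd
    exact nac (adjQ a c haQ hcQ dac)

end Aux

/-- In a block graph, every maximal threshold subgraph is a big ant `Q_u`
for some block `Q` and `u ∈ Q`. -/
theorem maximal_threshold_subgraph_of_blockGraph {V : Type*} [Fintype V] [Nonempty V]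
    (G : SimpleGraph V) (hG : IsBlockGraph G) (H : SimpleGraph V)
    (hle : H ≤ G) (hth : IsThresholdGraph H)
    (hmax : ∀ H' : SimpleGraph V, H' ≤ G → IsThresholdGraph H' → H ≤ H' → H = H') :
    ∃ (Q : Set V) (u : V), IsBlock G Q ∧ u ∈ Q ∧ H = bigAnt G Q u u := by
    classical
  obtain ⟨u, -, humax⟩ := Finset.exists_max_image Finset.univ (fun v => H.degree v)
    ⟨Classical.arbitrary V, Finset.mem_univ _⟩
  have hdeg : ∀ v, H.degree v ≤ H.degree u := fun v => humax v (Finset.mem_univ v)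
  have triangle_block : ∀ a b : V, H.Adj a b → a ≠ u → b ≠ u →
      ∃ Q', IsBlock G Q' ∧ u ∈ Q' ∧ a ∈ Q' ∧ b ∈ Q' := by
    intro a b hab ha hb
    obtain ⟨hua, hub⟩ := threshold_dominates hth hdeg hab ha hb
    have g1 : G.Adj u a := hle hua
    have g2 : G.Adj u b := hle hub
    have g3 : G.Adj a b := hle hab
    have hcl : G.IsClique {u, a, b} := by
      intro p hp q hq hpq
      simp only [Set.mem_insert_iff, Set.mem_singleton_iff] at hp hq
      rcases hp with rfl | rfl | rfl <;> rcases hq with rfl | rfl | rfl <;>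
        first
          | exact absurd rfl hpq
          | exact g1 | exact g2 | exact g3 | exact g1.symm | exact g2.symm | exact g3.symm
    obtain ⟨Q', hQ'b, hsub⟩ := exists_block_superset G
      (clique_twoConnected G hcl ⟨u, Or.inl rfl⟩)
    exact ⟨Q', hQ'b, hsub (Or.inl rfl), hsub (Or.inr (Or.inl rfl)),
      hsub (Or.inr (Or.inr rfl))⟩
  by_cases hedge : ∃ x y : V, H.Adj x y ∧ x ≠ u ∧ y ≠ u
  · obtain ⟨x₀, y₀, hxy₀, hx₀, hy₀⟩ := hedge
    obtain ⟨Q, hQb, huQ, hxQ, hyQ⟩ := triangle_block x₀ y₀ hxy₀ hx₀ hy₀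
    -- any H-edge from a vertex of Q \ {u} stays in Q
    have mem_Q_of_adj : ∀ w z : V, z ∈ Q → z ≠ u → w ≠ u → H.Adj z w → w ∈ Q := by
      intro w z hzQ hz hw hzw
      obtain ⟨Q₃, hQ₃b, huQ₃, hzQ₃, hwQ₃⟩ := triangle_block z w hzw hz hw
      have : Q₃ = Q := blocks_eq G hQ₃b hQb hz hzQ₃ hzQ huQ₃ huQ
      exact this ▸ hwQ₃
    have key : ∀ a b : V, H.Adj a b → a ≠ u → b ≠ u → a ∈ Q ∧ b ∈ Q := by
      intro a b hab ha hb
      by_cases haQ : a ∈ Q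
      · exact ⟨haQ, mem_Q_of_adj b a haQ ha hb hab⟩
      by_cases hbQ : b ∈ Q
      · exact ⟨mem_Q_of_adj a b hbQ hb ha hab.symm, hbQ⟩
      exfalso
      have nxa : ¬ H.Adj x₀ a := fun h => haQ (mem_Q_of_adj a x₀ hxQ hx₀ ha h)
      have nxb : ¬ H.Adj x₀ b := fun h => hbQ (mem_Q_of_adj b x₀ hxQ hx₀ hb h)
      have nya : ¬ H.Adj y₀ a := fun h => haQ (mem_Q_of_adj a y₀ hyQ hy₀ ha h)
      have nyb : ¬ H.Adj y₀ b := fun h => hbQ (mem_Q_of_adj b y₀ hyQ hy₀ hb h)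
      exact hth.1 ⟨x₀, y₀, a, b, hxy₀.ne, fun h => haQ (h ▸ hxQ), fun h => hbQ (h ▸ hxQ),
        fun h => haQ (h ▸ hyQ), fun h => hbQ (h ▸ hyQ), hab.ne,
        hxy₀, hab, nxa, nxb, nya, nyb⟩
    have hHle : H ≤ bigAnt G Q u u := by
      intro a b hab
      refine ⟨hle hab, ?_⟩
      by_cases ha : a = u
      · exact Or.inr (Or.inl ha)
      by_cases hb : b = u
      · exact Or.inr (Or.inr (Or.inl hb))
      · exact Or.inl (key a b hab ha hb)
    exact ⟨Q, u, hQb, huQ,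
      hmax _ (bigAnt_le G Q u) (bigAnt_threshold G (hG Q hQb) huQ) hHle⟩
  · push_neg at hedge
    have hcl : G.IsClique {u} := Set.pairwise_singleton u G.Adj
    obtain ⟨Q, hQb, hsub⟩ := exists_block_superset G (clique_twoConnected G hcl ⟨u, rfl⟩)
    have huQ : u ∈ Q := hsub rfl
    have hHle : H ≤ bigAnt G Q u u := by
      intro a b hab
      refine ⟨hle hab, ?_⟩
      by_cases ha : a = u
      · exact Or.inr (Or.inl ha)
      · exact Or.inr (Or.inr (Or.inl (hedge a b hab ha)))
    exact ⟨Q, u, hQb, huQ,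
      hmax _ (bigAnt_le G Q u) (bigAnt_threshold G (hG Q hQb) huQ) hHle⟩
end

section
/- If G is a graph with girth at least 5, then for every ordering σ of V(G) with u = σ(1), the σ-subgraph G^σ is a subgraph of the (u,v)-ant (N_G[u] ∪ N_G[v], δ_G(u) ∪ δ_G(v)) for some vertex v; consequently every maximal co-interval subgraph of G is a (u,v)-ant for some edge uv. -/
/-- The `(u,v)`-ant: the subgraph of `G` with edges `δ_G(u) ∪ δ_G(v)`. -/
def antGraph {V : Type*} (G : SimpleGraph V) (u v : V) : SimpleGraph V where
  Adj a b := G.Adj a b ∧ (a = u ∨ b = u ∨ a = v ∨ b = v)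
  symm := by
    constructor
    rintro a b ⟨h1, h2⟩
    exact ⟨h1.symm, by tauto⟩
  loopless := ⟨fun a h => G.irrefl h.1⟩

open SimpleGraph

lemma no_tri {V : Type*} {G : SimpleGraph V} (hg : 5 ≤ G.egirth)
    {x y z : V} (h1 : G.Adj x y) (h2 : G.Adj y z) (h3 : G.Adj z x) : False := by
  have hc : (Walk.cons h1 (Walk.cons h2 (Walk.cons h3 Walk.nil))).IsCycle := by
    simp [Walk.isCycle_def, Walk.isTrail_def, h1.ne, h2.ne, h3.ne, h1.ne', h2.ne', h3.ne',
      Sym2.eq, Sym2.rel_iff]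
  have := le_egirth.mp hg x _ hc
  norm_num [Walk.length_cons] at this

lemma common_nbr {V : Type*} {G : SimpleGraph V} (hg : 5 ≤ G.egirth)
    {x y w1 w2 : V} (hxy : x ≠ y) (h1 : G.Adj x w1) (h2 : G.Adj y w1)
    (h3 : G.Adj x w2) (h4 : G.Adj y w2) : w1 = w2 := by
  by_contra hne
  have hc : (Walk.cons h1 (Walk.cons h2.symm (Walk.cons h4 (Walk.cons h3.symm
      Walk.nil)))).IsCycle := by
    simp [Walk.isCycle_def, Walk.isTrail_def, h1.ne, h2.ne, h3.ne, h4.ne,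
      h1.ne', h2.ne', h3.ne', h4.ne', hxy, hne, Sym2.eq, Sym2.rel_iff]
    aesop
  have := le_egirth.mp hg x _ hc
  norm_num [Walk.length_cons] at this

lemma ant_coint {V : Type*} {G : SimpleGraph V} (hg : 5 ≤ G.egirth)
    {u v : V} (huv : G.Adj u v) : IsCoIntervalGraph (antGraph G u v) := by
  classical
  have huvne : u ≠ v := huv.ne
  have hvune : v ≠ u := huv.ne'
  refine ⟨fun x => if x = u then 0 else if x = v then 3 else if G.Adj u x then 1 else -1,
    fun x => if x = u then 0 else if x = v then 3 else if G.Adj u x then 4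
      else if G.Adj v x then 2 else 4, ?_, ?_⟩
  · intro x
    beta_reduce
    split_ifs <;> norm_num
  · have classify : ∀ z : V, z = u ∨ z = v ∨ (z ≠ u ∧ z ≠ v ∧ G.Adj u z) ∨
        (z ≠ u ∧ z ≠ v ∧ ¬G.Adj u z ∧ G.Adj v z) ∨
        (z ≠ u ∧ z ≠ v ∧ ¬G.Adj u z ∧ ¬G.Adj v z) := by tauto
    have hvy : ∀ z : V, G.Adj u z → ¬ G.Adj v z := by
      intro z h1 h2
      exact no_tri hg huv h2 h1.symm
    intro x y hxy
    have hcadj : (antGraph G u v)ᶜ.Adj x y ↔ ¬(G.Adj x y ∧ (x = u ∨ y = u ∨ x = v ∨ y = v)) := by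
      simp [SimpleGraph.compl_adj, antGraph, hxy]
    rw [hcadj, Set.Icc_inter_Icc, Set.nonempty_Icc, le_min_iff, max_le_iff, max_le_iff]
    beta_reduce
    rcases classify x with hx | hx | hx | hx | hx <;>
      rcases classify y with hy | hy | hy | hy | hy <;>
      simp_all <;> norm_num <;> tauto

lemma adj_of_mem_VSig {V : Type*} {G : SimpleGraph V} {n : ℕ} {σ : Fin n ≃ V}
    {i j : Fin n} {w : V} (hj : j ≤ i) (hw : w ∈ VSig G σ i) : G.Adj (σ j) w :=
  Set.mem_iInter₂.mp hw j (Finset.mem_Iic.mpr hj)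

lemma sigma_helper {V : Type*} {G : SimpleGraph V} (hg : 5 ≤ G.egirth) {n : ℕ} (hn : 0 < n)
    (σ : Fin n ≃ V) :
    (∀ a b : V, (sigmaSubgraph G σ).Adj a b → G.Adj a b ∧ (a = σ ⟨0, hn⟩ ∨ b = σ ⟨0, hn⟩)) ∨
    (∃ v, G.Adj (σ ⟨0, hn⟩) v ∧ sigmaSubgraph G σ ≤ antGraph G (σ ⟨0, hn⟩) v) := by
  set u : V := σ ⟨0, hn⟩ with hu
  have mem0 : ∀ (i : Fin n) (w : V), w ∈ VSig G σ i → G.Adj u w := by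
    intro i w hw
    exact adj_of_mem_VSig (by exact Fin.mk_le_of_le_val (Nat.zero_le _)) hw
  by_cases hcase : ∃ (i : Fin n) (w : V), 0 < (i : ℕ) ∧ w ∈ VSig G σ i
  · obtain ⟨i0, w0, hi0, hw0⟩ := hcase
    have h1n : 1 < n := lt_of_le_of_lt hi0 i0.isLt
    set one : Fin n := ⟨1, h1n⟩ with hone
    have hone_le : ∀ i : Fin n, 0 < (i : ℕ) → one ≤ i := fun i hi => hi
    have hne01 : u ≠ σ one := by
      intro h
      have := σ.injective h
      simp [Fin.ext_iff, hone] at this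
    have uniq : ∀ (i : Fin n) (w : V), 0 < (i : ℕ) → w ∈ VSig G σ i → w = w0 := by
      intro i w hi hw
      exact common_nbr hg hne01 (mem0 i w hw) (adj_of_mem_VSig (hone_le i hi) hw)
        (mem0 i0 w0 hw0) (adj_of_mem_VSig (hone_le i0 hi0) hw0)
    refine Or.inr ⟨w0, mem0 i0 w0 hw0, ?_⟩
    intro a b hab
    have key : ∀ c d, (∃ i, c = σ i ∧ d ∈ VSig G σ i) →
        G.Adj c d ∧ (c = u ∨ d = u ∨ c = w0 ∨ d = w0) := by
      rintro c d ⟨i, hc, hd⟩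
      refine ⟨hc ▸ adj_of_mem_VSig le_rfl hd, ?_⟩
      rcases Nat.eq_zero_or_pos (i : ℕ) with hi | hi
      · left; rw [hc, hu]; congr 1; exact Fin.ext hi
      · right; right; right; exact uniq i d hi hd
    rcases hab with h | h
    · exact key a b h
    · obtain ⟨h1, h2⟩ := key b a h
      exact ⟨h1.symm, by tauto⟩
  · push_neg at hcase
    refine Or.inl ?_
    intro a b hab
    have key : ∀ c d, (∃ i, c = σ i ∧ d ∈ VSig G σ i) → G.Adj c d ∧ c = u := by
      rintro c d ⟨i, hc, hd⟩
      refine ⟨hc ▸ adj_of_mem_VSig le_rfl hd, ?_⟩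
      rcases Nat.eq_zero_or_pos (i : ℕ) with hi | hi
      · rw [hc, hu]; congr 1; exact Fin.ext hi
      · exact absurd hd (hcase i d hi)
    rcases hab with h | h
    · obtain ⟨h1, h2⟩ := key a b h
      exact ⟨h1, Or.inl h2⟩
    · obtain ⟨h1, h2⟩ := key b a h
      exact ⟨h1.symm, Or.inr h2⟩

lemma le_sigma_of_coint {V : Type*} [Fintype V] {G H : SimpleGraph V} (hHG : H ≤ G)
    (hH : IsCoIntervalGraph H) : ∃ σ : Fin (Fintype.card V) ≃ V, H ≤ sigmaSubgraph G σ := by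
  obtain ⟨a, b, hab, hiff⟩ := hH
  set e : Fin (Fintype.card V) ≃ V := (Fintype.equivFin V).symm with he
  set σ : Fin (Fintype.card V) ≃ V := (Tuple.sort (b ∘ e) : Equiv.Perm _).trans e with hσ
  have mono : Monotone fun i => b (σ i) := by
    have := Tuple.monotone_sort (b ∘ e)
    intro i j hij
    exact this hij
  refine ⟨σ, ?_⟩
  have nonadj : ∀ x y : V, x ≠ y →
      ¬(Set.Icc (a x) (b x) ∩ Set.Icc (a y) (b y)).Nonempty → H.Adj x y := by
    intro x y hne hns
    by_contra hadj
    exact hns ((hiff x y hne).mp (by simp [SimpleGraph.compl_adj, hne, hadj]))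
  have key : ∀ x y : V, H.Adj x y → b x < a y → (sigmaSubgraph G σ).Adj x y := by
    intro x y hxy hlt
    refine Or.inl ⟨σ.symm x, (σ.apply_symm_apply x).symm, ?_⟩
    apply Set.mem_iInter₂.mpr
    intro j hj
    have hbj : b (σ j) ≤ b x := by
      have h2 := mono (Finset.mem_Iic.mp hj)
      simpa [σ.apply_symm_apply] using h2
    have hja : b (σ j) < a y := lt_of_le_of_lt hbj hlt
    have hjy : σ j ≠ y := by
      intro h
      rw [h] at hja
      exact absurd (hab y) (not_le.mpr hja)
    have hdisj : ¬(Set.Icc (a (σ j)) (b (σ j)) ∩ Set.Icc (a y) (b y)).Nonempty := by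
      rintro ⟨t, ⟨_, ht1⟩, ht2, _⟩
      exact absurd (ht2.trans ht1) (not_le.mpr hja)
    exact hHG (nonadj _ _ hjy hdisj)
  intro x y hxy
  have hne : x ≠ y := hxy.ne
  have hnone : ¬(Set.Icc (a x) (b x) ∩ Set.Icc (a y) (b y)).Nonempty := by
    intro h
    have := (hiff x y hne).mpr h
    simp [SimpleGraph.compl_adj] at this
    exact this.2 hxy
  rw [Set.Icc_inter_Icc, Set.nonempty_Icc, le_min_iff, max_le_iff, max_le_iff] at hnone
  have hcases : b x < a y ∨ b y < a x := by
    by_contra h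
    push_neg at h
    exact hnone ⟨⟨hab x, h.1⟩, h.2, hab y⟩
  rcases hcases with h | h
  · exact key x y hxy h
  · exact ((sigmaSubgraph G σ).adj_symm (key y x hxy.symm h))

/-- In a graph of girth at least 5: (i) for every ordering `σ`, the σ-subgraph
`G^σ` is a subgraph of the `(σ 0, v)`-ant for some vertex `v`; (ii) every
(nonempty) maximal co-interval subgraph of `G` is a `(u,v)`-ant for an edge `uv`. -/
theorem sigmaSubgraph_le_ant_of_girth_ge_five {V : Type*} [Fintype V] [Nonempty V]
    (G : SimpleGraph V) (hg : 5 ≤ G.egirth) :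
    (∀ σ : Fin (Fintype.card V) ≃ V, ∃ v : V,
        sigmaSubgraph G σ ≤ antGraph G (σ ⟨0, Fintype.card_pos⟩) v) ∧
    (∀ H : SimpleGraph V, H ≤ G → IsCoIntervalGraph H →
        (∀ H' : SimpleGraph V, H' ≤ G → IsCoIntervalGraph H' → H ≤ H' → H = H') →
        H ≠ ⊥ → ∃ u v : V, G.Adj u v ∧ H = antGraph G u v) := by
  constructor
  · intro σ
    rcases sigma_helper hg Fintype.card_pos σ with h | ⟨v, _, hle⟩
    · refine ⟨σ ⟨0, Fintype.card_pos⟩, fun a b hab => ?_⟩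
      obtain ⟨h1, h2⟩ := h a b hab
      exact ⟨h1, by tauto⟩
    · exact ⟨v, hle⟩
  · intro H hHG hHci hmax hne
    obtain ⟨σ, hle⟩ := le_sigma_of_coint hHG hHci
    set u : V := σ ⟨0, Fintype.card_pos⟩ with hu
    rcases sigma_helper hg Fintype.card_pos σ with hstar | ⟨v, huv, hant⟩
    · have hedge : ∃ x y, H.Adj x y := by
        by_contra hn
        push_neg at hn
        exact hne (by ext x y; simp [hn x y])
      obtain ⟨x, y, hxy⟩ := hedge
      have hx := hstar x y (hle hxy)
      have hw : ∃ w, H.Adj u w := by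
        rcases hx.2 with h | h
        · exact ⟨y, by rw [hu, ← h]; exact hxy⟩
        · exact ⟨x, by rw [hu, ← h]; exact hxy.symm⟩
      obtain ⟨w, hw⟩ := hw
      have hGuw : G.Adj u w := hHG hw
      refine ⟨u, w, hGuw, hmax (antGraph G u w) (fun a b h => h.1) (ant_coint hg hGuw) ?_⟩
      intro a b h
      obtain ⟨h1, h2⟩ := hstar a b (hle h)
      exact ⟨h1, by tauto⟩
    · exact ⟨u, v, huv,
        hmax (antGraph G u v) (fun a b h => h.1) (ant_coint hg huv) (hle.trans hant)⟩
end
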